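/- arXiv:2503.02536 — 4 statements merged into one kernel-verified Lean document; each statement's English description precedes it below -/
import Mathlib

section
/- Assume m ≥ n+1 and that f_1,…,f_m satisfy the SNC hypothesis. Then the radical of the ideal I_m(Q_{∖1}) ⊆ R generated by all m×m minors of Q_{∖1} equals the irrelevant maximal ideal ⟨x_1,…,x_n⟩ of R. -/
open MvPolynomial

noncomputable section

/-- The polynomial ring `R = ℂ[x_1,…,x_n]`. -/
abbrev Rp (n : ℕ) := MvPolynomial (Fin n) ℂ

/-- The polynomial ring `S = ℂ[s_1,…,s_m,x_1,…,x_n]`; `Sum.inl i ↦ s_i`, `Sum.inr j ↦ x_j`. -/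
abbrev Sp (n m : ℕ) := MvPolynomial (Fin m ⊕ Fin n) ℂ

/-- The inclusion `R ⊆ S`. -/
def toS (n m : ℕ) : Rp n →ₐ[ℂ] Sp n m := rename Sum.inr

/-- Column index set for `Q_{∖1}`: diagonal columns `2,…,m` and the `n` Jacobian columns. -/
abbrev Col (n m : ℕ) := {k : Fin m // (k : ℕ) ≠ 0} ⊕ Fin n

/-- The SNC (strict normal crossing) hypothesis, via the Jacobian criterion. -/
def SNC (n m : ℕ) (f : Fin m → Rp n) : Prop :=
  (∀ i, Irreducible (f i)) ∧
  ∀ I : Finset (Fin m), 1 ≤ I.card → I.card ≤ n →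
    ∀ p : Fin n → ℂ, p ≠ 0 → (∀ i ∈ I, eval p (f i) = 0) →
      (Matrix.of fun (i : I) (j : Fin n) => eval p (pderiv j (f i.1))).rank = I.card

/-- The matrix `Q = (diag(f_1,…,f_m) | J_f)`. -/
def Qmat (n m : ℕ) (f : Fin m → Rp n) : Matrix (Fin m) (Fin m ⊕ Fin n) (Rp n) :=
  Matrix.of fun i => Sum.elim (fun k => if i = k then f i else 0) (fun j => pderiv j (f i))

/-- The matrix `Q_{∖1}`, obtained from `Q` by deleting the first column. -/
def Q1 (n m : ℕ) (f : Fin m → Rp n) : Matrix (Fin m) (Col n m) (Rp n) :=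
  Matrix.of fun i => Sum.elim (fun k => if i = (k : Fin m) then f i else 0)
    (fun j => pderiv j (f i))

/-- The matrix `Q^s_{∖1}`: `Q_{∖1}` (over `S`) with the row `(s_2,…,s_m,0,…,0)` appended. -/
def Qs1 (n m : ℕ) (f : Fin m → Rp n) : Matrix (Option (Fin m)) (Col n m) (Sp n m) :=
  Matrix.of fun i? c =>
    i?.elim (Sum.elim (fun k : {k : Fin m // (k : ℕ) ≠ 0} => (X (Sum.inl (k : Fin m)) : Sp n m)) (fun _ : Fin n => (0 : Sp n m)) c)
      (fun i => toS n m (Q1 n m f i c))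

/-- The ideal generated by all `k × k` minors of a matrix. -/
def minorsIdeal {A : Type*} [CommRing A] {ι κ : Type*} (k : ℕ) (M : Matrix ι κ A) : Ideal A :=
  Ideal.span {x | ∃ r : Fin k → ι, ∃ c : Fin k → κ,
    Function.Injective r ∧ Function.Injective c ∧ x = (M.submatrix r c).det}

/-- `h_j = Σ_i s_i·(Π_{k≠i} f_k)·∂f_i/∂x_j`. -/
def hpoly (n m : ℕ) (f : Fin m → Rp n) (j : Fin n) : Sp n m :=
  ∑ i, X (Sum.inl i) * toS n m (((Finset.univ.erase i).prod f) * pderiv j (f i))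

/-- The linear form `Σ_i d_i·s_i`. -/
def linForm (n m : ℕ) (d : Fin m → ℕ) : Sp n m := ∑ i, (d i : Sp n m) * X (Sum.inl i)

/-- The likelihood ideal `I_A`: contraction to `S` of the ideal `⟨h_1,…,h_n⟩` of `S_f`. -/
def IA (n m : ℕ) (f : Fin m → Rp n) : Ideal (Sp n m) :=
  (Ideal.span (Set.range fun j =>
      algebraMap (Sp n m) (Localization.Away (toS n m (∏ i, f i))) (hpoly n m f j))).comap
    (algebraMap (Sp n m) (Localization.Away (toS n m (∏ i, f i))))

/-! ### Auxiliary lemmas -/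

/-- Euler's identity for a single monomial. -/
lemma euler_monomial {n : ℕ} (s : Fin n →₀ ℕ) (a : ℂ) :
    ∑ j : Fin n, X j * pderiv j (monomial s a) = ∑ j : Fin n, s j • monomial s a := by
  refine Finset.sum_congr rfl fun j _ => ?_
  rcases Nat.eq_zero_or_pos (s j) with h | h
  · simp [pderiv_monomial, h]
  · rw [pderiv_monomial, X, monomial_mul, one_mul]
    have hs : Finsupp.single j 1 + (s - Finsupp.single j 1) = s := by
      ext j'
      rcases eq_or_ne j' j with rfl | hj
      · simp only [Finsupp.add_apply, Finsupp.single_apply, if_pos rfl, if_true,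
          Finsupp.tsub_apply]
        omega
      · simp [Finsupp.single_apply, hj.symm, Finsupp.tsub_apply]
    rw [hs, smul_monomial]
    simp only [nsmul_eq_mul, one_mul, smul_eq_mul]
    ring_nf

/-- Euler's identity for homogeneous polynomials. -/
lemma euler {n d : ℕ} {f : MvPolynomial (Fin n) ℂ} (hf : f.IsHomogeneous d) :
    ∑ j : Fin n, X j * pderiv j f = d • f := by
  conv_lhs => rw [f.as_sum]
  simp only [map_sum, Finset.mul_sum]
  rw [Finset.sum_comm]
  conv_rhs => rw [f.as_sum, Finset.smul_sum]
  refine Finset.sum_congr rfl fun s hs => ?_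
  rw [euler_monomial, ← Finset.sum_smul]
  congr 1
  have hdeg : s.degree = d := by
    by_contra h
    exact mem_support_iff.mp hs (hf.coeff_eq_zero h)
  rw [← hdeg, Finsupp.degree]
  exact (Finset.sum_subset (Finset.subset_univ _) (by
    intro x _ hx
    simpa using hx)).symm

/-- Euler's identity, evaluated at a point. -/
lemma euler_eval {n d : ℕ} {f : MvPolynomial (Fin n) ℂ} (hf : f.IsHomogeneous d)
    (p : Fin n → ℂ) :
    ∑ j : Fin n, p j * eval p (pderiv j f) = d * eval p f := by
  have := congrArg (eval p) (euler hf)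
  simpa [nsmul_eq_mul] using this

/-- If a matrix over `ℂ` has rank equal to its number of columns, then its kernel is trivial. -/
lemma eq_zero_of_mulVecLin_of_rank {ι κ : Type*} [Fintype ι] [Fintype κ]
    (A : Matrix ι κ ℂ) (h : A.rank = Fintype.card κ) {c : κ → ℂ}
    (hc : A.mulVecLin c = 0) : c = 0 := by
  have h2 := LinearMap.finrank_range_add_finrank_ker A.mulVecLin
  rw [Module.finrank_pi] at h2
  have hr : Module.finrank ℂ (LinearMap.range A.mulVecLin) = A.rank := rfl
  have hker : Module.finrank ℂ (LinearMap.ker A.mulVecLin) = 0 := by omega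
  have hbot : LinearMap.ker A.mulVecLin = ⊥ := Submodule.finrank_eq_zero.mp hker
  have hmem : c ∈ LinearMap.ker A.mulVecLin := hc
  rw [hbot] at hmem
  simpa using hmem

/-- A matrix with linearly independent rows has an invertible maximal square submatrix. -/
lemma exists_submatrix_det_ne_zero {m : ℕ} {κ : Type*} [Fintype κ]
    (M : Matrix (Fin m) κ ℂ) (h : LinearIndependent ℂ (fun i => M i)) :
    ∃ c : Fin m → κ, Function.Injective c ∧ (M.submatrix id c).det ≠ 0 := by
  classical
  have hrank : M.rank = m := by
    simpa using h.rank_matrix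
  have hspan : Submodule.span ℂ (Set.range M.transpose) = ⊤ := by
    apply Submodule.eq_top_of_finrank_eq
    change Module.finrank ℂ (Submodule.span ℂ (Set.range M.col)) = _
    rw [← Matrix.rank_eq_finrank_span_cols, hrank, Module.finrank_pi, Fintype.card_fin]
  obtain ⟨b, hbsub, hbspan, hbli⟩ := exists_linearIndependent ℂ (Set.range M.transpose)
  rw [hspan] at hbspan
  let B : Module.Basis b ℂ (Fin m → ℂ) :=
    Module.Basis.mk hbli (by rw [Subtype.range_coe_subtype, Set.setOf_mem_eq, hbspan])
  let e : Fin m ≃ b := (B.indexEquiv (Pi.basisFun ℂ (Fin m))).symm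
  have hchoice : ∀ x : b, ∃ k : κ, M.transpose k = (x : Fin m → ℂ) := fun x => hbsub x.2
  choose g hg using hchoice
  refine ⟨fun i => g (e i), ?_, ?_⟩
  · intro i i' hii
    have : (e i : Fin m → ℂ) = (e i' : Fin m → ℂ) := by
      rw [← hg (e i), ← hg (e i')]
      exact congrArg M.transpose hii
    exact e.injective (Subtype.ext this)
  · have hcols : LinearIndependent ℂ
        (fun i => (M.submatrix id (fun i => g (e i))).transpose i) := by
      have : (fun i => (M.submatrix id (fun i => g (e i))).transpose i)
          = fun i => (e i : Fin m → ℂ) := by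
        funext i
        rw [← hg (e i)]
        rfl
      rw [this]
      exact hbli.comp e e.injective
    have := Matrix.linearIndependent_cols_iff_isUnit.mp hcols
    rw [Matrix.isUnit_iff_isUnit_det] at this
    exact this.ne_zero

/-- Under the SNC hypothesis and `m ≥ n+1`, the radical of the ideal of
maximal minors of `Q_{∖1}` is the irrelevant maximal ideal `⟨x_1,…,x_n⟩` of `R`. -/
theorem radical_minors_eq_irrelevant (n m : ℕ) (hn : 2 ≤ n) (hm : n + 1 ≤ m)
    (f : Fin m → Rp n) (d : Fin m → ℕ)
    (hf0 : ∀ i, f i ≠ 0) (hfh : ∀ i, (f i).IsHomogeneous (d i)) (hd : ∀ i, 1 ≤ d i)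
    (hsnc : SNC n m f) :
    (minorsIdeal m (Q1 n m f)).radical =
      Ideal.span (Set.range fun j : Fin n => (X j : Rp n)) := by
  classical
  -- evaluation of each `f i` at `0` vanishes
  have hf00 : ∀ i, eval (0 : Fin n → ℂ) (f i) = 0 := by
    intro i
    rw [eval_zero]
    apply (hfh i).coeff_eq_zero
    simp only [map_zero]
    have := hd i
    omega
  -- Step 1: the zero locus of the ideal of maximal minors is `{0}`
  have key : zeroLocus ℂ (minorsIdeal m (Q1 n m f)) = {0} := by
    apply Set.eq_of_subset_of_subset
    · -- zeroLocus ⊆ {0}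
      intro p hp
      simp only [Set.mem_singleton_iff]
      by_contra hp0
      set M : Matrix (Fin m) (Col n m) ℂ := (Q1 n m f).map (eval p) with hM
      -- the rows of `M` are linearly independent
      have hrows : LinearIndependent ℂ (fun i => M i) := by
        rw [Fintype.linearIndependent_iff]
        intro c hc
        have hcol : ∀ col : Col n m, ∑ i, c i * M i col = 0 := by
          intro col
          have := congrFun hc col
          simpa [Finset.sum_apply] using this
        -- diagonal columns
        have hdiag : ∀ k : Fin m, (k : ℕ) ≠ 0 → c k * eval p (f k) = 0 := by
          intro k hk
          have h1 := hcol (Sum.inl ⟨k, hk⟩)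
          rw [Finset.sum_eq_single k (fun i _ hik => by
              simp [hM, Q1, Matrix.map_apply, hik]) (by simp)] at h1
          simpa [hM, Q1, Matrix.map_apply] using h1
        -- Jacobian columns
        have hjac : ∀ j : Fin n, ∑ i, c i * eval p (pderiv j (f i)) = 0 := by
          intro j
          have := hcol (Sum.inr j)
          simpa [hM, Q1, Matrix.map_apply] using this
        set I : Finset (Fin m) := Finset.univ.filter (fun i => eval p (f i) = 0) with hI
        have hmemI : ∀ i, i ∈ I ↔ eval p (f i) = 0 := by
          intro i
          simp [hI]
        -- at most `n-1` of the `f i` vanish at `p`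
        have hIlt : I.card < n := by
          by_contra hge
          push_neg at hge
          obtain ⟨J, hJI, hJcard⟩ := Finset.exists_subset_card_eq hge
          have hrank := hsnc.2 J (by omega) (le_of_eq hJcard) p hp0
            (fun i hi => (hmemI i).mp (hJI hi))
          have hpz : (Matrix.of fun (i : J) (j : Fin n) =>
              eval p (pderiv j (f i.1))).mulVecLin p = 0 := by
            funext i
            simp only [Matrix.mulVecLin_apply, Matrix.mulVec, dotProduct, Matrix.of_apply,
              Pi.zero_apply]
            have hi0 : eval p (f i.1) = 0 := (hmemI i.1).mp (hJI i.2)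
            calc ∑ j, eval p (pderiv j (f i.1)) * p j
                = ∑ j, p j * eval p (pderiv j (f i.1)) := by
                  exact Finset.sum_congr rfl fun j _ => mul_comm _ _
              _ = (d i.1 : ℂ) * eval p (f i.1) := euler_eval (hfh i.1) p
              _ = 0 := by rw [hi0, mul_zero]
          have := eq_zero_of_mulVecLin_of_rank _ (by
            rw [hrank, hJcard, Fintype.card_fin]) hpz
          exact hp0 this
        -- coefficients outside `I` vanish
        have hsum0 : ∑ i', c i' * ((d i' : ℂ) * eval p (f i')) = 0 := by
          calc ∑ i', c i' * ((d i' : ℂ) * eval p (f i'))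
              = ∑ i', c i' * (∑ j, p j * eval p (pderiv j (f i'))) := by
                exact Finset.sum_congr rfl fun i' _ => by rw [euler_eval (hfh i') p]
            _ = ∑ i', ∑ j, c i' * (p j * eval p (pderiv j (f i'))) := by
                exact Finset.sum_congr rfl fun i' _ => Finset.mul_sum _ _ _
            _ = ∑ j, ∑ i', c i' * (p j * eval p (pderiv j (f i'))) := Finset.sum_comm
            _ = ∑ j : Fin n, p j * ∑ i', c i' * eval p (pderiv j (f i')) := by
                refine Finset.sum_congr rfl fun j _ => ?_
                rw [Finset.mul_sum]
                exact Finset.sum_congr rfl fun i' _ => by ring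
            _ = 0 := by
                refine Finset.sum_eq_zero fun j _ => ?_
                rw [hjac j, mul_zero]
        have hc0 : ∀ i, i ∉ I → c i = 0 := by
          intro i hi
          have hfi : eval p (f i) ≠ 0 := fun h => hi ((hmemI i).mpr h)
          rcases Nat.eq_zero_or_pos (i : ℕ) with hiv | hiv
          · -- the first index: use Euler's identity
            have hterm : ∀ i' ∈ Finset.univ, i' ≠ i →
                c i' * ((d i' : ℂ) * eval p (f i')) = 0 := by
              intro i' _ hne
              by_cases hI' : i' ∈ I
              · rw [(hmemI i').mp hI', mul_zero, mul_zero]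
              · have hi'v : (i' : ℕ) ≠ 0 := fun h => hne (Fin.val_injective (h.trans hiv.symm))
                have hfi' : eval p (f i') ≠ 0 := fun h => hI' ((hmemI i').mpr h)
                rcases mul_eq_zero.mp (hdiag i' hi'v) with h | h
                · rw [h, zero_mul]
                · exact absurd h hfi'
            have hzz : c i * ((d i : ℂ) * eval p (f i)) = 0 := by
              rw [← hsum0, Finset.sum_eq_single i hterm (by simp)]
            rcases mul_eq_zero.mp hzz with h | h
            · exact h
            · rcases mul_eq_zero.mp h with h' | h'
              · exact absurd h' (Nat.cast_ne_zero.mpr (by have := hd i; omega))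
              · exact absurd h' hfi
          · rcases mul_eq_zero.mp (hdiag i (by omega)) with h | h
            · exact h
            · exact absurd h hfi
        -- coefficients inside `I` vanish, using the SNC rank condition
        intro i
        by_cases hi : i ∈ I
        · have hIcard1 : 1 ≤ I.card := Finset.card_pos.mpr ⟨i, hi⟩
          have hrank := hsnc.2 I hIcard1 (le_of_lt hIlt) p hp0
            (fun i' hi' => (hmemI i').mp hi')
          set A : Matrix I (Fin n) ℂ :=
            Matrix.of fun (i : I) (j : Fin n) => eval p (pderiv j (f i.1)) with hA
          have hct : (fun i' : I => c i'.1) = 0 := by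
            apply eq_zero_of_mulVecLin_of_rank A.transpose
            · rw [Matrix.rank_transpose, hrank, Fintype.card_coe]
            · funext j
              simp only [Matrix.mulVecLin_apply, Matrix.mulVec, dotProduct,
                Matrix.transpose_apply, Pi.zero_apply, hA, Matrix.of_apply]
              have hrestrict : ∑ i' : I, eval p (pderiv j (f i'.1)) * c i'.1
                  = ∑ i' ∈ I, c i' * eval p (pderiv j (f i')) := by
                rw [← Finset.sum_attach I (fun i' => c i' * eval p (pderiv j (f i')))]
                exact Finset.sum_congr rfl fun i' _ => mul_comm _ _
              rw [hrestrict, Finset.sum_subset (Finset.subset_univ I)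
                (fun i' _ hi' => by rw [hc0 i' hi', zero_mul]), hjac j]
          have := congrFun hct ⟨i, hi⟩
          simpa using this
        · exact hc0 i hi
      -- extract a nonvanishing maximal minor
      obtain ⟨csel, hinj, hdet⟩ := exists_submatrix_det_ne_zero M hrows
      apply hdet
      have hgen : ((Q1 n m f).submatrix id csel).det ∈ minorsIdeal m (Q1 n m f) :=
        Ideal.subset_span ⟨id, csel, Function.injective_id, hinj, rfl⟩
      have h := (mem_zeroLocus_iff.mp hp) _ hgen
      change (eval p) ((Q1 n m f).submatrix id csel).det = 0 at h
      rw [RingHom.map_det] at h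
      exact h
    · -- {0} ⊆ zeroLocus
      intro p hp
      simp only [Set.mem_singleton_iff] at hp
      subst hp
      rw [mem_zeroLocus_iff]
      intro q hq
      have hle : minorsIdeal m (Q1 n m f) ≤ RingHom.ker (eval (0 : Fin n → ℂ)) := by
        rw [minorsIdeal, Ideal.span_le]
        rintro x ⟨r, c, hr, hc, rfl⟩
        rw [SetLike.mem_coe, RingHom.mem_ker, RingHom.map_det]
        -- some column of the submatrix is a diagonal column
        have hex : ∃ k k0, c k = Sum.inl k0 := by
          by_contra hne
          push_neg at hne
          have : ∀ k, ∃ j, c k = Sum.inr j := by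
            intro k
            cases hck : c k with
            | inl k0 => exact absurd hck (hne k k0)
            | inr j => exact ⟨j, rfl⟩
          choose g hg using this
          have hginj : Function.Injective g := by
            intro a b hab
            apply hc
            rw [hg a, hg b, hab]
          have := Fintype.card_le_of_injective g hginj
          simp only [Fintype.card_fin] at this
          omega
        obtain ⟨k, k0, hk⟩ := hex
        apply Matrix.det_eq_zero_of_column_eq_zero k
        intro i
        simp only [RingHom.mapMatrix_apply, Matrix.map_apply, Matrix.submatrix_apply, hk, Q1,
          Matrix.of_apply, Sum.elim_inl, id_eq]
        split
        · exact hf00 _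
        · exact map_zero _
      change (eval 0) q = 0
      exact hle hq
  -- Step 2: conclude via the Nullstellensatz
  rw [← MvPolynomial.vanishingIdeal_zeroLocus_eq_radical (K := ℂ), key]
  apply le_antisymm
  · intro q hq
    have h0 : eval (0 : Fin n → ℂ) q = 0 := mem_vanishingIdeal_iff.mp hq 0 rfl
    have : Set.range (fun j : Fin n => (X j : Rp n)) = X '' Set.univ := by
      rw [Set.image_univ]
    rw [this, mem_ideal_span_X_image]
    intro mo hmo
    have hmo0 : mo ≠ 0 := by
      rintro rfl
      rw [eval_zero] at h0
      exact mem_support_iff.mp hmo h0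
    obtain ⟨i, hi⟩ := Finsupp.ne_iff.mp hmo0
    exact ⟨i, Set.mem_univ i, by simpa using hi⟩
  · rw [Ideal.span_le]
    rintro x ⟨j, rfl⟩
    rw [SetLike.mem_coe, mem_vanishingIdeal_iff]
    rintro x hx
    simp only [Set.mem_singleton_iff] at hx
    subst hx
    simp
end
end

section
/- Assume m ≥ n+1. For any nonzero homogeneous f_1,…,f_m (no SNC hypothesis), the determinantal ideal is contained in the likelihood ideal: I_{m+1}(Q^s_{∖1}) + ⟨Σ_{i=1}^m d_i·s_i⟩ ⊆ I_A. -/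
/-!
Clearing denominators, `f · x ∈ ⟨h_1,…,h_n⟩` already puts `x` in `I_A`. For the linear form this
is Euler's identity: `Σ_j x_j h_j = f · Σ_i d_i s_i`. For the minors, the rows of `Q^s_{∖1}`
satisfy `f · row none ≡ Σ_i s_i (Π_{k≠i} f_k) · row (some i)` modulo the `h_j`, since the Jacobian
columns of the right-hand side are exactly the `h_j`. Every `(m+1)`-minor uses all `m+1` rows,
so replacing its row `none` by that combination multiplies it by `f` and makes it vanish
modulo `⟨h_1,…,h_n⟩`.
-/

open MvPolynomial

noncomputable section

theorem Ideal.mem_comap_map_of_mul_mem {A L : Type*} [CommRing A] [CommRing L] [Algebra A L]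
    {a : A} [IsLocalization.Away a L] {J : Ideal A} {x : A} (h : a * x ∈ J) :
    x ∈ (J.map (algebraMap A L)).comap (algebraMap A L) := by
  have hax := Ideal.mem_map_of_mem (algebraMap A L) h
  rwa [map_mul, Ideal.unit_mul_mem_iff_mem _ (IsLocalization.Away.algebraMap_isUnit a)] at hax

theorem Matrix.mul_det_mem_of_row_relation {ι A : Type*} [Fintype ι] [DecidableEq ι]
    [CommRing A] (N : Matrix ι ι A) {I : Ideal A} {i₀ : ι} {a : A} {c : ι → A} (hc : c i₀ = 0)
    (h : ∀ j, a * N i₀ j - ∑ k, c k * N k j ∈ I) : a * N.det ∈ I := by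
  let π := Ideal.Quotient.mk I
  have hrow : π a • N.map π i₀ = ∑ k, π (c k) • N.map π k := by
    ext j
    have hj := h j
    rw [← Ideal.Quotient.eq_zero_iff_mem, map_sub, sub_eq_zero, map_mul, map_sum] at hj
    simpa [Finset.sum_apply] using hj
  rw [← Ideal.Quotient.eq_zero_iff_mem, map_mul, RingHom.map_det, RingHom.mapMatrix_apply]
  calc π a * (N.map π).det = ((N.map π).updateRow i₀ (π a • N.map π i₀)).det := by
        rw [det_updateRow_smul, updateRow_eq_self]
    _ = 0 := by rw [hrow, det_updateRow_sum, hc, map_zero, zero_smul]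

theorem mem_IA_of_mul_mem {n m : ℕ} {f : Fin m → Rp n} {x : Sp n m}
    (hx : toS n m (∏ i, f i) * x ∈ Ideal.span (Set.range (hpoly n m f))) :
    x ∈ IA n m f := by
  rw [IA, Set.range_comp', ← Ideal.map_span]
  exact Ideal.mem_comap_map_of_mul_mem hx

theorem sum_X_mul_hpoly {n m : ℕ} {f : Fin m → Rp n} {d : Fin m → ℕ}
    (hfh : ∀ i, (f i).IsHomogeneous (d i)) :
    ∑ j, X (Sum.inr j) * hpoly n m f j = toS n m (∏ i, f i) * linForm n m d := by
  have hX : ∀ j, X (Sum.inr j) = toS n m (X j) := fun j => (rename_X _ _).symm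
  calc ∑ j, X (Sum.inr j) * hpoly n m f j
      = ∑ i, X (Sum.inl i) *
          toS n m ((Finset.univ.erase i).prod f * ∑ j, X j * pderiv j (f i)) := by
        simp only [hpoly, Finset.mul_sum, map_sum, map_mul, hX]
        rw [Finset.sum_comm]
        refine Finset.sum_congr rfl fun i _ => Finset.sum_congr rfl fun j _ => ?_
        ring
    _ = ∑ i, X (Sum.inl i) * toS n m ((Finset.univ.erase i).prod f * (d i • f i)) := by
        simp only [(hfh _).sum_X_mul_pderiv]
    _ = toS n m (∏ i, f i) * linForm n m d := by
        rw [linForm, Finset.mul_sum]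
        refine Finset.sum_congr rfl fun i _ => ?_
        rw [mul_smul_comm, Finset.prod_erase_mul _ _ (Finset.mem_univ i), map_nsmul,
          nsmul_eq_mul]
        ring

theorem linForm_mem_IA {n m : ℕ} {f : Fin m → Rp n} {d : Fin m → ℕ}
    (hfh : ∀ i, (f i).IsHomogeneous (d i)) : linForm n m d ∈ IA n m f := by
  refine mem_IA_of_mul_mem ?_
  rw [← sum_X_mul_hpoly hfh]
  exact Ideal.sum_mem _ fun j _ => Ideal.mul_mem_left _ _ (Ideal.subset_span ⟨j, rfl⟩)

def rowCoeff (n m : ℕ) (f : Fin m → Rp n) : Option (Fin m) → Sp n m :=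
  fun o => o.elim 0 fun i => X (Sum.inl i) * toS n m ((Finset.univ.erase i).prod f)

theorem prod_mul_Qs1_none_add {n m : ℕ} (f : Fin m → Rp n) (c : Col n m) :
    toS n m (∏ i, f i) * Qs1 n m f none c + Sum.elim (fun _ => 0) (hpoly n m f) c =
      ∑ o, rowCoeff n m f o * Qs1 n m f o c := by
  rw [Fintype.sum_option]
  cases c with
  | inl k =>
    simp only [rowCoeff, Qs1, Q1, Matrix.of_apply, Option.elim, Sum.elim_inl, zero_mul,
      zero_add, add_zero]
    rw [Finset.sum_eq_single (k : Fin m) (fun i _ hi => by rw [if_neg hi, map_zero, mul_zero])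
      (by simp), if_pos rfl, mul_assoc, ← map_mul, Finset.prod_erase_mul _ _ (Finset.mem_univ _)]
    ring
  | inr j =>
    simp only [rowCoeff, Qs1, Q1, Matrix.of_apply, Option.elim, Sum.elim_inr, mul_zero,
      zero_add, hpoly, map_mul, mul_assoc]

theorem Qs1_row_relation {n m : ℕ} (f : Fin m → Rp n) (c : Col n m) :
    toS n m (∏ i, f i) * Qs1 n m f none c - ∑ o, rowCoeff n m f o * Qs1 n m f o c ∈
      Ideal.span (Set.range (hpoly n m f)) := by
  rw [← prod_mul_Qs1_none_add, sub_add_cancel_left, neg_mem_iff]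
  cases c with
  | inl _ => exact zero_mem _
  | inr j => exact Ideal.subset_span ⟨j, rfl⟩

theorem minorsIdeal_Qs1_le_IA {n m : ℕ} (f : Fin m → Rp n) :
    minorsIdeal (m + 1) (Qs1 n m f) ≤ IA n m f := by
  rw [minorsIdeal, Ideal.span_le]
  rintro _ ⟨r, c, hr, -, rfl⟩
  let e := Equiv.ofBijective r ((Fintype.bijective_iff_injective_and_card r).2 ⟨hr, by simp⟩)
  have hr₀ : r (e.symm none) = none := e.apply_symm_apply none
  refine mem_IA_of_mul_mem (Matrix.mul_det_mem_of_row_relation _ (i₀ := e.symm none)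
    (c := fun k => rowCoeff n m f (r k)) (by simp [hr₀, rowCoeff]) fun j => ?_)
  simp only [Matrix.submatrix_apply, hr₀]
  rw [Fintype.sum_equiv e (fun k => rowCoeff n m f (r k) * Qs1 n m f (r k) (c j))
    (fun o => rowCoeff n m f o * Qs1 n m f o (c j)) fun _ => rfl]
  exact Qs1_row_relation f (c j)

theorem determinantal_ideal_le_likelihood_ideal_general (n m : ℕ)
    (f : Fin m → Rp n) (d : Fin m → ℕ)
    (hfh : ∀ i, (f i).IsHomogeneous (d i)) :
    minorsIdeal (m + 1) (Qs1 n m f) + Ideal.span {linForm n m d} ≤ IA n m f := by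
  rw [Ideal.add_eq_sup, sup_le_iff, Ideal.span_le, Set.singleton_subset_iff]
  exact ⟨minorsIdeal_Qs1_le_IA f, linForm_mem_IA hfh⟩

/-- Without any SNC hypothesis, the determinantal ideal is contained in
the likelihood ideal. -/
theorem determinantal_ideal_le_likelihood_ideal (n m : ℕ) (hn : 2 ≤ n) (hm : n + 1 ≤ m)
    (f : Fin m → Rp n) (d : Fin m → ℕ)
    (hf0 : ∀ i, f i ≠ 0) (hfh : ∀ i, (f i).IsHomogeneous (d i)) (hd : ∀ i, 1 ≤ d i) :
    minorsIdeal (m + 1) (Qs1 n m f) + Ideal.span {linForm n m d} ≤ IA n m f :=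
  determinantal_ideal_le_likelihood_ideal_general n m f d hfh
end
end

section
/- Assume m ≥ n+1 and that f_1,…,f_m satisfy the SNC hypothesis. Let P ∈ I_A be any element of the form P = Σ_{i=1}^m s_i·q_i with q_1,…,q_m ∈ R (i.e., P is homogeneous of degree 1 in the s-variables with coefficients in R). Then there exists θ = (θ_1,…,θ_n) ∈ R^n such that f_i·q_i = Σ_{j=1}^n θ_j·∂f_i/∂x_j for every i = 1,…,m. In particular, θ is a derivation tangent to the arrangement and the evaluation map θ ↦ Σ_i s_i·(Σ_j θ_j ∂f_i/∂x_j)/f_i from tangent derivations onto the s-degree-one part of I_A is surjective. -/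
open MvPolynomial

noncomputable section

-- ===================== auxiliary lemmas =====================

-- degree of finsupp as sum over univ
lemma degree_eq_sum_univ {n : ℕ} (d : Fin n →₀ ℕ) : d.degree = ∑ j, d j := by
  rw [Finsupp.degree]
  exact Finset.sum_subset (Finset.subset_univ _)
    (fun i _ hi => Finsupp.notMem_support_iff.mp hi)

lemma isHomogeneous_coeff {n : ℕ} {φ : Rp n} {e : ℕ} (h : φ.IsHomogeneous e)
    {d : Fin n →₀ ℕ} (hd : coeff d φ ≠ 0) : d.degree = e := by
  rw [Finsupp.degree_eq_weight_one]; exact h hd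

/-- Euler's identity. -/
lemma euler_identity {n : ℕ} {φ : Rp n} {e : ℕ} (h : φ.IsHomogeneous e) :
    ∑ j, X j * pderiv j φ = (C (e : ℂ)) * φ := by
  conv_lhs => rw [φ.as_sum]
  conv_rhs => rw [φ.as_sum]
  rw [Finset.mul_sum]
  simp only [map_sum, Finset.mul_sum]
  rw [Finset.sum_comm]
  refine Finset.sum_congr rfl fun d hd => ?_
  have hdeg : d.degree = e := isHomogeneous_coeff h (mem_support_iff.mp hd)
  have key : ∀ j : Fin n, X j * pderiv j (monomial d (coeff d φ))
      = monomial d (coeff d φ * d j) := by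
    intro j
    rw [pderiv_monomial]
    by_cases hj : d j = 0
    · simp [hj]
    · rw [X, monomial_mul, one_mul]
      have hle : Finsupp.single j 1 ≤ d := by
        rw [Finsupp.single_le_iff]; omega
      rw [add_tsub_cancel_of_le hle]
  simp only [key]
  rw [← map_sum (monomial d), ← Finset.mul_sum, ← Nat.cast_sum, ← degree_eq_sum_univ, hdeg,
    C_mul_monomial, mul_comm]

/-- Evaluation `s ↦ 0` keeping the `x` variables. -/
def eps (n m : ℕ) : Sp n m →ₐ[ℂ] Rp n :=
  aeval (Sum.elim (fun _ => (0 : Rp n)) X)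

lemma eps_toS {n m : ℕ} (r : Rp n) : eps n m (toS n m r) = r := by
  show aeval (Sum.elim (fun _ => (0 : Rp n)) X) (rename Sum.inr r) = r
  rw [aeval_rename]
  simp only [Sum.elim_comp_inr]
  exact aeval_X_left_apply r

lemma eps_X_inl {n m : ℕ} (i : Fin m) : eps n m (X (Sum.inl i)) = 0 := by
  simp [eps]

lemma pderiv_inl_toS {n m : ℕ} (i : Fin m) (r : Rp n) :
    pderiv (Sum.inl i) (toS n m r) = 0 := by
  apply pderiv_eq_zero_of_notMem_vars
  intro hmem
  have := vars_rename Sum.inr r hmem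
  simp only [Finset.mem_image] at this
  obtain ⟨j, -, hj⟩ := this
  exact Sum.inr_ne_inl hj

lemma pderiv_inl_X_inl {n m : ℕ} (i l : Fin m) :
    pderiv (Sum.inl i) (X (Sum.inl l) : Sp n m) = if l = i then 1 else 0 := by
  rcases eq_or_ne l i with h | h
  · subst h; simp [pderiv_X_self]
  · rw [pderiv_X_of_ne (by simpa using h)]
    simp [h]

lemma homogeneousComponent_of_isHomogeneous {n : ℕ} {φ : Rp n} {e t : ℕ}
    (h : φ.IsHomogeneous e) :
    homogeneousComponent t φ = if t = e then φ else 0 := by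
  rcases eq_or_ne t e with rfl | ht
  · rw [if_pos rfl]
    ext d
    rw [coeff_homogeneousComponent]
    rcases eq_or_ne d.degree t with h1 | h1
    · rw [if_pos h1]
    · rw [if_neg h1]
      refine (em (coeff d φ = 0)).elim (fun h0 => by rw [h0]) (fun h0 => absurd ?_ h1)
      exact isHomogeneous_coeff h h0
  · rw [if_neg ht]
    ext d
    rw [coeff_homogeneousComponent, coeff_zero]
    rcases eq_or_ne d.degree t with h1 | h1
    · rw [if_pos h1]
      refine (em (coeff d φ = 0)).elim (fun h0 => by rw [h0]) (fun h0 => absurd ?_ ht)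
      rw [← h1]
      exact isHomogeneous_coeff h h0
    · rw [if_neg h1]

lemma homogeneousComponent_mul_isHomogeneous {n : ℕ} {g : Rp n} {e t : ℕ}
    (hg : g.IsHomogeneous e) (u : Rp n) :
    homogeneousComponent (t + e) (u * g) = homogeneousComponent t u * g := by
  induction u using MvPolynomial.induction_on' with
  | add p q hp hq => rw [add_mul, map_add, map_add, hp, hq, add_mul]
  | monomial α c =>
      have hmon : (monomial α c : Rp n).IsHomogeneous α.degree :=
        isHomogeneous_monomial c rfl
      rw [homogeneousComponent_of_isHomogeneous (hmon.mul hg),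
        homogeneousComponent_of_isHomogeneous hmon]
      rcases eq_or_ne t α.degree with ht | ht
      · rw [if_pos (by omega), if_pos ht]
      · rw [if_neg (by omega), if_neg ht, zero_mul]

open Finset in
/-- Weak projective Nullstellensatz: fewer than `n` forms of positive degree in `n`
variables have a common nontrivial zero. -/
lemma exists_common_zero {n : ℕ} {ι : Type} [Fintype ι] (g : ι → Rp n)
    (e : ι → ℕ) (he : ∀ i, 1 ≤ e i) (hg : ∀ i, (g i).IsHomogeneous (e i))
    (hcard : Fintype.card ι < n) :
    ∃ p : Fin n → ℂ, p ≠ 0 ∧ ∀ i, eval p (g i) = 0 := by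
  classical
  by_contra hcon
  push_neg at hcon
  set I : Ideal (Rp n) := Ideal.span (Set.range g) with hI
  have hrad : ∀ l : Fin n, X l ∈ I.radical := by
    intro l
    rw [← MvPolynomial.vanishingIdeal_zeroLocus_eq_radical (K := ℂ)]
    intro x hx
    rw [aeval_X]
    by_contra hxl
    have hx0 : x ≠ 0 := fun h => hxl (by rw [h]; rfl)
    obtain ⟨i, hi⟩ := hcon x hx0
    exact hi (hx (g i) (Ideal.subset_span ⟨i, rfl⟩))
  -- choose a uniform exponent N
  have hN : ∃ N : ℕ, 1 ≤ N ∧ (∀ i, e i ≤ N) ∧ ∀ l : Fin n, X l ^ N ∈ I := by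
    choose Nl hNl using fun l => (Ideal.mem_radical_iff.mp (hrad l))
    refine ⟨(univ.sup Nl) + (univ.sup e) + 1, by omega, fun i => ?_, fun l => ?_⟩
    · have := Finset.le_sup (f := e) (mem_univ i); omega
    · have hle : Nl l ≤ univ.sup Nl + univ.sup e + 1 :=
        le_trans (Finset.le_sup (mem_univ l)) (by omega)
      rw [show univ.sup Nl + univ.sup e + 1 = Nl l + (univ.sup Nl + univ.sup e + 1 - Nl l) by
        omega, pow_add]
      exact Ideal.mul_mem_right _ _ (hNl l)
  obtain ⟨N, hN1, hNe, hNmem⟩ := hN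
  set B : ℕ := n * (N - 1) with hB
  -- the spanning sets
  set SpanSet : ℕ → Set (Rp n) := fun t =>
    {x | ∃ (a : ι → ℕ) (w : Fin n →₀ ℕ), w.degree ≤ B ∧ (∑ i, a i * e i) + w.degree ≤ t ∧
      x = (∏ i, g i ^ a i) * monomial w 1} with hSpanSet
  have hmulstep : ∀ (t : ℕ) (i : ι) (x : Rp n), x ∈ Submodule.span ℂ (SpanSet t) →
      x * g i ∈ Submodule.span ℂ (SpanSet (t + e i)) := by
    intro t i x hx
    induction hx using Submodule.span_induction with
    | mem y hy =>
        obtain ⟨a, w, hw, hsum, rfl⟩ := hy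
        refine Submodule.subset_span ⟨Function.update a i (a i + 1), w, hw, ?_, ?_⟩
        · have hupd : ∀ j, Function.update a i (a i + 1) j * e j
              = (if j = i then e i else 0) + a j * e j := by
            intro j
            rcases eq_or_ne j i with rfl | hj
            · rw [Function.update_self, if_pos rfl, add_mul, one_mul, add_comm]
            · rw [Function.update_of_ne hj, if_neg hj, zero_add]
          rw [Finset.sum_congr rfl (fun j _ => hupd j), Finset.sum_add_distrib,
            Finset.sum_ite_eq' univ i (fun _ => e i), if_pos (mem_univ i)]
          omega
        · have hupd : ∀ j, g j ^ Function.update a i (a i + 1) j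
              = (if j = i then g i else 1) * g j ^ a j := by
            intro j
            rcases eq_or_ne j i with rfl | hj
            · rw [Function.update_self, if_pos rfl, pow_succ, mul_comm]
            · rw [Function.update_of_ne hj, if_neg hj, one_mul]
          rw [Finset.prod_congr rfl (fun j _ => hupd j), Finset.prod_mul_distrib,
            Finset.prod_ite_eq' univ i (fun _ => g i), if_pos (mem_univ i)]
          ring
    | zero => rw [zero_mul]; exact Submodule.zero_mem _
    | add y z hy hz hy' hz' => rw [add_mul]; exact Submodule.add_mem _ hy' hz'
    | smul c y hy hy' => rw [smul_mul_assoc]; exact Submodule.smul_mem _ _ hy'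
  have hmono : ∀ {t t' : ℕ}, t ≤ t' →
      Submodule.span ℂ (SpanSet t) ≤ Submodule.span ℂ (SpanSet t') := by
    intro t t' htt
    apply Submodule.span_mono
    rintro x ⟨a, w, hw, hsum, rfl⟩
    exact ⟨a, w, hw, by omega, rfl⟩
  -- the spanning claim
  have hspan : ∀ (t : ℕ) (u : Rp n), u.totalDegree ≤ t →
      u ∈ Submodule.span ℂ (SpanSet t) := by
    intro t
    induction t using Nat.strong_induction_on with
    | _ t IH =>
      -- first reduce to monomials
      suffices hmon : ∀ μ : Fin n →₀ ℕ, μ.degree ≤ t →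
          (monomial μ 1 : Rp n) ∈ Submodule.span ℂ (SpanSet t) by
        intro u hu
        rw [u.as_sum]
        refine Submodule.sum_mem _ fun μ hμ => ?_
        have : (monomial μ (coeff μ u) : Rp n) = (coeff μ u) • monomial μ 1 := by
          rw [smul_monomial, smul_eq_mul, mul_one]
        rw [this]
        refine Submodule.smul_mem _ _ (hmon μ ?_)
        rw [degree_eq_sum_univ]
        calc ∑ j, μ j = ∑ j ∈ μ.support, μ j :=
              (Finset.sum_subset (subset_univ _)
                (fun i _ hi => Finsupp.notMem_support_iff.mp hi)).symm
          _ ≤ t := le_trans (le_totalDegree hμ) hu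
      intro μ hμt
      by_cases hcase : μ.degree ≤ B
      · refine Submodule.subset_span ⟨fun _ => 0, μ, hcase, by simpa using hμt, ?_⟩
        simp
      · -- some exponent is at least N
        push_neg at hcase
        have hex : ∃ l, N ≤ μ l := by
          by_contra hall
          push_neg at hall
          have : μ.degree ≤ B := by
            rw [degree_eq_sum_univ, hB]
            calc ∑ j, μ j ≤ ∑ _j : Fin n, (N - 1) :=
                  Finset.sum_le_sum (fun j _ => by have := hall j; omega)
              _ = n * (N - 1) := by rw [Finset.sum_const, card_univ, Fintype.card_fin, smul_eq_mul]
          omega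
        obtain ⟨l, hl⟩ := hex
        set μ' : Fin n →₀ ℕ := μ - Finsupp.single l N with hμ'
        have hsingle_le : Finsupp.single l N ≤ μ := by rw [Finsupp.single_le_iff]; exact hl
        have hμeq : (monomial μ 1 : Rp n) = X l ^ N * monomial μ' 1 := by
          rw [X_pow_eq_monomial, monomial_mul, mul_one, hμ', add_tsub_cancel_of_le hsingle_le]
        have hμ'deg : μ'.degree = μ.degree - N := by
          rw [degree_eq_sum_univ, degree_eq_sum_univ]
          have h1 : ∀ j, μ' j = μ j - (Finsupp.single l N) j := fun j => Finsupp.tsub_apply _ _ _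
          have h2 : ∑ j, μ' j = μ' l + ∑ j ∈ univ.erase l, μ' j :=
            (Finset.add_sum_erase _ _ (mem_univ l)).symm
          have h3 : ∑ j, μ j = μ l + ∑ j ∈ univ.erase l, μ j :=
            (Finset.add_sum_erase _ _ (mem_univ l)).symm
          have h4 : ∑ j ∈ univ.erase l, μ' j = ∑ j ∈ univ.erase l, μ j := by
            refine Finset.sum_congr rfl fun j hj => ?_
            rw [h1 j, Finsupp.single_apply, if_neg (Finset.ne_of_mem_erase hj).symm]
            omega
          have h5 : μ' l = μ l - N := by
            rw [h1 l, Finsupp.single_apply, if_pos rfl]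
          omega
        -- write X l ^ N in terms of the g i with homogeneous coefficients
        obtain ⟨c, hc⟩ := (Submodule.mem_span_range_iff_exists_fun (Rp n)).mp (hNmem l)
        simp only [smul_eq_mul] at hc
        have hXN : (X l ^ N : Rp n) = ∑ i, homogeneousComponent (N - e i) (c i) * g i := by
          have h0 := congrArg (homogeneousComponent N) hc
          rw [map_sum, homogeneousComponent_of_isHomogeneous (isHomogeneous_X_pow l N),
            if_pos rfl] at h0
          rw [← h0]
          refine Finset.sum_congr rfl fun i _ => ?_
          have hrw : homogeneousComponent ((N - e i) + e i) (c i * g i)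
              = homogeneousComponent (N - e i) (c i) * g i :=
            homogeneousComponent_mul_isHomogeneous (hg i) _
          rw [show (N - e i) + e i = N by have := hNe i; omega] at hrw
          exact hrw
        have hNled : N ≤ μ.degree := le_trans hl (by
          rw [degree_eq_sum_univ]
          exact Finset.single_le_sum (f := fun j => μ j) (fun _ _ => Nat.zero_le _) (mem_univ l))
        have hfinal : (monomial μ 1 : Rp n)
            = ∑ i, (monomial μ' 1 * homogeneousComponent (N - e i) (c i)) * g i := by
          rw [hμeq, hXN, Finset.sum_mul]
          refine Finset.sum_congr rfl fun i _ => by ring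
        rw [hfinal]
        refine Submodule.sum_mem _ fun i _ => ?_
        have hdegi : (monomial μ' 1 * homogeneousComponent (N - e i) (c i)).totalDegree
            ≤ t - e i := by
          refine le_trans (totalDegree_mul _ _) ?_
          have d1 : (monomial μ' 1 : Rp n).totalDegree ≤ μ.degree - N :=
            le_trans (totalDegree_monomial_le _ _) (le_of_eq hμ'deg)
          have d2 : (homogeneousComponent (N - e i) (c i)).totalDegree ≤ N - e i :=
            IsHomogeneous.totalDegree_le (homogeneousComponent_isHomogeneous _ _)
          have hei := hNe i
          omega
        have hti : t - e i < t := by have := he i; omega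
        have hmem2 := IH (t - e i) hti _ hdegi
        have hmem3 := hmulstep (t - e i) i _ hmem2
        refine hmono (by have := hNe i; omega) hmem3
  -- Counting contradiction
  set E : ℕ := n ^ n * (B + 1) ^ n with hE
  set r : ℕ := Fintype.card ι with hr
  set S : Finset (Rp n) :=
    Finset.image (fun aw : (ι → Fin (E + 1)) × (Fin n → Fin (B + 1)) =>
      (∏ i, g i ^ (aw.1 i : ℕ)) *
        monomial (Finsupp.equivFunOnFinite.symm fun j => (aw.2 j : ℕ)) 1) Finset.univ with hS
  have hspanS : SpanSet E ⊆ (S : Set (Rp n)) := by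
    rintro x ⟨a, w, hw, hsum, rfl⟩
    have hae : ∀ i, a i ≤ E := fun i =>
      calc a i ≤ a i * e i := Nat.le_mul_of_pos_right _ (he i)
        _ ≤ ∑ i', a i' * e i' :=
            Finset.single_le_sum (f := fun i' => a i' * e i') (fun _ _ => Nat.zero_le _)
              (mem_univ i)
        _ ≤ E := by omega
    have hwe : ∀ j, w j ≤ B := fun j => le_trans (by
      rw [degree_eq_sum_univ w]
      exact Finset.single_le_sum (f := fun j' => w j') (fun _ _ => Nat.zero_le _)
        (mem_univ j)) hw
    refine Finset.mem_coe.mpr (Finset.mem_image.mpr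
      ⟨(fun i => ⟨a i, by have := hae i; omega⟩, fun j => ⟨w j, by have := hwe j; omega⟩),
        Finset.mem_univ _, ?_⟩)
    show (∏ i, g i ^ (a i)) * monomial (Finsupp.equivFunOnFinite.symm fun j => w j) 1 = _
    rw [Finsupp.equivFunOnFinite_symm_coe]
  set cc : ℕ := E / n with hcc
  have hn0 : 0 < n := lt_of_le_of_lt (Nat.zero_le _) hcard
  have hinj : Function.Injective
      (fun v : Fin n → Fin (cc + 1) => Finsupp.equivFunOnFinite.symm fun j => (v j : ℕ)) := by
    intro v v' hvv'
    funext j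
    have h2 := congrArg (fun w : (Fin n →₀ ℕ) => Finsupp.equivFunOnFinite w j) hvv'
    simp only [Equiv.apply_symm_apply] at h2
    exact Fin.val_injective h2
  set D : Finset (Fin n →₀ ℕ) := Finset.image
    (fun v : Fin n → Fin (cc + 1) => Finsupp.equivFunOnFinite.symm fun j => (v j : ℕ))
    Finset.univ with hD
  have hDcard : D.card = (cc + 1) ^ n := by
    rw [hD, Finset.card_image_of_injective _ hinj, card_univ, Fintype.card_fun,
      Fintype.card_fin, Fintype.card_fin]
  have hbig : ∀ s ∈ D, (monomial s 1 : Rp n) ∈ Submodule.span ℂ (S : Set (Rp n)) := by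
    intro s hs
    rw [hD, Finset.mem_image] at hs
    obtain ⟨v, -, rfl⟩ := hs
    have hdeg : (Finsupp.equivFunOnFinite.symm fun j => (v j : ℕ)).degree ≤ E := by
      rw [degree_eq_sum_univ]
      calc ∑ j, (Finsupp.equivFunOnFinite.symm fun j => (v j : ℕ)) j
            = ∑ j, (v j : ℕ) := rfl
        _ ≤ ∑ _j : Fin n, cc := Finset.sum_le_sum (fun j _ => by
            have := (v j).isLt; omega)
        _ = n * cc := by rw [Finset.sum_const, card_univ, Fintype.card_fin, smul_eq_mul]
        _ ≤ E := Nat.mul_div_le E n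
    have hmem := hspan E (monomial (Finsupp.equivFunOnFinite.symm fun j => (v j : ℕ)) (1 : ℂ))
      (le_trans (isHomogeneous_monomial (1 : ℂ) rfl).totalDegree_le hdeg)
    exact Submodule.span_mono hspanS hmem
  have hli : LinearIndependent ℂ (fun s : ↥D => (monomial (s : Fin n →₀ ℕ) 1 : Rp n)) := by
    have hb := (MvPolynomial.basisMonomials (Fin n) ℂ).linearIndependent
    rw [coe_basisMonomials] at hb
    exact hb.comp _ Subtype.val_injective
  set W := Submodule.span ℂ (S : Set (Rp n)) with hW
  have hres : LinearIndependent ℂ (fun s : ↥D => (⟨_, hbig s s.2⟩ : W)) := by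
    apply LinearIndependent.of_comp W.subtype
    exact hli
  have hcardle : (cc + 1) ^ n ≤ S.card := by
    have h3 := hres.fintype_card_le_finrank
    rw [Fintype.card_coe, hDcard] at h3
    exact le_trans h3 (finrank_span_finset_le_card S)
  have h2 : S.card ≤ (E + 1) ^ r * (B + 1) ^ n := by
    refine le_trans Finset.card_image_le ?_
    rw [Finset.card_univ, Fintype.card_prod, Fintype.card_fun, Fintype.card_fun,
      Fintype.card_fin, Fintype.card_fin, Fintype.card_fin]
  have key1 : E + 1 ≤ n * (cc + 1) := by
    have hdm := Nat.div_add_mod E n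
    have hml := Nat.mod_lt E hn0
    rw [hcc, Nat.mul_add, Nat.mul_one]
    omega
  have key2 : (E + 1) ^ n ≤ n ^ n * (cc + 1) ^ n := by
    calc (E + 1) ^ n ≤ (n * (cc + 1)) ^ n := Nat.pow_le_pow_left key1 n
      _ = n ^ n * (cc + 1) ^ n := mul_pow _ _ _
  have key3 : (E + 1) ^ r * (E + 1) ≤ (E + 1) ^ n := by
    rw [← pow_succ]
    exact Nat.pow_le_pow_right (by omega) (by omega)
  have hQpos : 0 < (E + 1) ^ r := Nat.pow_pos (by omega)
  have hfin : n ^ n * (cc + 1) ^ n < n ^ n * (cc + 1) ^ n := by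
    calc n ^ n * (cc + 1) ^ n ≤ n ^ n * S.card :=
          Nat.mul_le_mul_left _ hcardle
      _ ≤ n ^ n * ((E + 1) ^ r * (B + 1) ^ n) := Nat.mul_le_mul_left _ h2
      _ = (E + 1) ^ r * (n ^ n * (B + 1) ^ n) := by ring
      _ < (E + 1) ^ r * (E + 1) := by
          have hlt : n ^ n * (B + 1) ^ n < E + 1 := by omega
          exact (mul_lt_mul_iff_right₀ hQpos).mpr hlt
      _ ≤ (E + 1) ^ n := key3
      _ ≤ n ^ n * (cc + 1) ^ n := key2
  exact absurd hfin (lt_irrefl _)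


lemma rows_linearIndependent {w : ℕ} {ι : Type} [Fintype ι] (M : Matrix ι (Fin w) ℂ)
    (h : M.rank = Fintype.card ι) : LinearIndependent ℂ (fun i => M i) := by
  rw [linearIndependent_iff_card_eq_finrank_span]
  rw [Matrix.rank_eq_finrank_span_row] at h
  exact h.symm

lemma det_ne_zero_of_rows {w : ℕ} (M : Matrix (Fin w) (Fin w) ℂ)
    (h : LinearIndependent ℂ (fun i => M i)) : M.det ≠ 0 := by
  intro hdet
  obtain ⟨v, hv0, hv⟩ := Matrix.exists_vecMul_eq_zero_iff.mpr hdet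
  have hz : ∑ i, v i • M i = 0 := by
    ext j
    rw [Finset.sum_apply]
    simpa [Matrix.vecMul, dotProduct] using congrFun hv j
  have hall := Fintype.linearIndependent_iff.mp h v hz
  exact hv0 (by funext i; exact hall i)

lemma euler_eval_s14 {n : ℕ} {φ : Rp n} {e : ℕ} (h : φ.IsHomogeneous e) (p : Fin n → ℂ) :
    ∑ j, p j * eval p (pderiv j φ) = (e : ℂ) * eval p φ := by
  simpa using congrArg (eval p) (euler_identity h)


open Finset in
lemma exists_minor_not_dvd (n m : ℕ) (hn : 2 ≤ n) (hm : n + 1 ≤ m)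
    (f : Fin m → Rp n) (d : Fin m → ℕ)
    (hfh : ∀ i, (f i).IsHomogeneous (d i)) (hd : ∀ i, 1 ≤ d i)
    (hsnc : SNC n m f) (k : Fin m) :
    ∃ r : Fin n → Fin m,
      ¬ f k ∣ (Matrix.of fun (i j : Fin n) => pderiv j (f (r i))).det := by
  classical
  obtain ⟨I0, hkI0, -, hI0card⟩ := Finset.exists_subsuperset_card_eq (n := n - 1)
    (Finset.subset_univ {k}) (by rw [Finset.card_singleton]; omega)
    (by rw [Finset.card_univ, Fintype.card_fin]; omega)
  obtain ⟨p, hp0, hpz⟩ := exists_common_zero (n := n) (ι := ↥I0)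
    (fun i => f i) (fun i => d i) (fun i => hd i) (fun i => hfh i)
    (by rw [Fintype.card_coe, hI0card]; omega)
  have hzI0 : ∀ i ∈ I0, eval p (f i) = 0 := fun i hi => hpz ⟨i, hi⟩
  have hkz : eval p (f k) = 0 := hzI0 k (hkI0 (Finset.mem_singleton_self k))
  set T : Finset (Fin m) := univ.filter (fun i => eval p (f i) = 0) with hT
  have hI0T : I0 ⊆ T := fun i hi => Finset.mem_filter.mpr ⟨mem_univ i, hzI0 i hi⟩
  have finish : ∀ r : Fin n → Fin m,
      LinearIndependent ℂ (fun (i : Fin n) => fun j => eval p (pderiv j (f (r i)))) →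
      ¬ f k ∣ (Matrix.of fun (i j : Fin n) => pderiv j (f (r i))).det := by
    intro r hli hdvd
    have hdet0 : eval p ((Matrix.of fun (i j : Fin n) => pderiv j (f (r i))).det) = 0 := by
      obtain ⟨u, hu⟩ := hdvd
      rw [hu, map_mul, hkz, zero_mul]
    have hdet0' : (Matrix.of (fun (i j : Fin n) => eval p (pderiv j (f (r i))))).det = 0 := by
      have hmd := RingHom.map_det (eval p : Rp n →+* ℂ)
        (Matrix.of fun (i j : Fin n) => pderiv j (f (r i)))
      rw [hdet0] at hmd
      exact hmd.symm
    exact det_ne_zero_of_rows _ hli hdet0'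
  by_cases hTcard : n ≤ T.card
  · obtain ⟨I1, hI1T, hI1card⟩ := Finset.exists_subset_card_eq hTcard
    have hrank := hsnc.2 I1 (by omega) (by omega) p hp0
      (fun i hi => (Finset.mem_filter.mp (hI1T hi)).2)
    have hli1 := rows_linearIndependent
      (Matrix.of fun (i : ↥I1) (j : Fin n) => eval p (pderiv j (f i.1)))
      (by rw [Fintype.card_coe]; exact hrank)
    set κ : Fin n ≃ ↥I1 :=
      (Fintype.equivOfCardEq (by rw [Fintype.card_fin, Fintype.card_coe, hI1card])) with hκ
    exact ⟨fun i => ((κ i : ↥I1) : Fin m), finish _ (hli1.comp κ κ.injective)⟩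
  · have hTI0 : T = I0 := (Finset.eq_of_subset_of_card_le hI0T (by rw [hI0card]; omega)).symm
    have hex : ∃ i', i' ∉ T := by
      by_contra hall
      push_neg at hall
      have hcle : (univ : Finset (Fin m)).card ≤ T.card :=
        Finset.card_le_card (fun i _ => hall i)
      rw [Finset.card_univ, Fintype.card_fin] at hcle
      omega
    obtain ⟨i', hi'⟩ := hex
    have hfi' : eval p (f i') ≠ 0 := by
      intro h0
      exact hi' (Finset.mem_filter.mpr ⟨mem_univ _, h0⟩)
    have hrank := hsnc.2 I0 (by omega) (by omega) p hp0 hzI0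
    have hli0 := rows_linearIndependent
      (Matrix.of fun (i : ↥I0) (j : Fin n) => eval p (pderiv j (f i.1)))
      (by rw [Fintype.card_coe]; exact hrank)
    set idx : Option ↥I0 → Fin m := fun o => o.elim i' (fun i => i.1) with hidx
    have hliO : LinearIndependent ℂ
        (fun (o : Option ↥I0) => fun j => eval p (pderiv j (f (idx o)))) := by
      apply Fintype.linearIndependent_iff.mpr
      intro c hc
      have hc' : ∀ j, ∑ o, c o * eval p (pderiv j (f (idx o))) = 0 := by
        intro j
        have hcj := congrFun hc j
        rw [Finset.sum_apply] at hcj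
        simpa using hcj
      have hpair : ∀ o : Option ↥I0, ∑ j, p j * eval p (pderiv j (f (idx o)))
          = (d (idx o) : ℂ) * eval p (f (idx o)) := fun o => euler_eval_s14 (hfh _) p
      have h2 : ∑ o : Option ↥I0, c o * ((d (idx o) : ℂ) * eval p (f (idx o))) = 0 := by
        calc ∑ o : Option ↥I0, c o * ((d (idx o) : ℂ) * eval p (f (idx o)))
            = ∑ o : Option ↥I0, c o * (∑ j, p j * eval p (pderiv j (f (idx o)))) := by
              refine Finset.sum_congr rfl fun o _ => ?_
              rw [hpair o]
          _ = ∑ o : Option ↥I0, ∑ j, c o * (p j * eval p (pderiv j (f (idx o)))) := by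
              simp_rw [Finset.mul_sum]
          _ = ∑ j, ∑ o : Option ↥I0, c o * (p j * eval p (pderiv j (f (idx o)))) :=
              Finset.sum_comm
          _ = ∑ j, p j * ∑ o : Option ↥I0, c o * eval p (pderiv j (f (idx o))) := by
              refine Finset.sum_congr rfl fun j _ => ?_
              rw [Finset.mul_sum]
              exact Finset.sum_congr rfl fun o _ => by ring
          _ = 0 := by simp [hc']
      rw [Fintype.sum_option] at h2
      rw [Finset.sum_eq_zero (fun (i : ↥I0) _ => by
        have hzi : eval p (f i.1) = 0 := hzI0 i.1 i.2
        show c (some i) * ((d (idx (some i)) : ℂ) * eval p (f (idx (some i)))) = 0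
        have : idx (some i) = i.1 := rfl
        rw [this, hzi, mul_zero, mul_zero])] at h2
      have hcnone : c none = 0 := by
        rw [add_zero] at h2
        have hd' : (d i' : ℂ) ≠ 0 := Nat.cast_ne_zero.mpr (by have := hd i'; omega)
        have hii : idx none = i' := rfl
        rw [hii] at h2
        rcases mul_eq_zero.mp h2 with h | h
        · exact h
        · exact absurd h (mul_ne_zero hd' hfi')
      intro o
      rcases o with _ | i
      · exact hcnone
      · have hrest : ∑ i : ↥I0, c (some i) •
            (fun j => eval p (pderiv j (f (i : Fin m)))) = 0 := by
          have hco := hc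
          rw [Fintype.sum_option, hcnone, zero_smul, zero_add] at hco
          exact hco
        exact Fintype.linearIndependent_iff.mp hli0 (fun i => c (some i)) hrest i
    set κ : Fin n ≃ Option ↥I0 := Fintype.equivOfCardEq (by
      rw [Fintype.card_fin, Fintype.card_option, Fintype.card_coe, hI0card]
      omega) with hκ
    exact ⟨fun i => idx (κ i), finish _ (hliO.comp κ κ.injective)⟩

open Finset in
lemma dvd_components (n m : ℕ) (hn : 2 ≤ n) (hm : n + 1 ≤ m)
    (f : Fin m → Rp n) (d : Fin m → ℕ)
    (hfh : ∀ i, (f i).IsHomogeneous (d i)) (hd : ∀ i, 1 ≤ d i)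
    (hsnc : SNC n m f) (k : Fin m) (hk : Prime (f k))
    (G : Fin n → Rp n) (hG : ∀ i, f k ∣ ∑ j, G j * pderiv j (f i)) :
    ∀ j, f k ∣ G j := by
  classical
  obtain ⟨r, hr⟩ := exists_minor_not_dvd n m hn hm f d hfh hd hsnc k
  set A : Matrix (Fin n) (Fin n) (Rp n) := Matrix.of fun i j => pderiv j (f (r i)) with hA
  have hvec : ∀ i, f k ∣ (A.mulVec G) i := by
    intro i
    show f k ∣ ∑ j, A i j * G j
    have hcomm : ∑ j, A i j * G j = ∑ j, G j * pderiv j (f (r i)) :=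
      Finset.sum_congr rfl fun j _ => mul_comm _ _
    rw [hcomm]
    exact hG (r i)
  have hsm : A.det • G = A.adjugate.mulVec (A.mulVec G) := by
    rw [Matrix.mulVec_mulVec, Matrix.adjugate_mul, Matrix.smul_mulVec, Matrix.one_mulVec]
  intro j
  have hdetG : A.det * G j = ∑ i, A.adjugate j i * (A.mulVec G) i := by
    have happ := congrFun hsm j
    simpa [Matrix.mulVec, dotProduct] using happ
  have hdvd2 : f k ∣ A.det * G j := by
    rw [hdetG]
    exact Finset.dvd_sum fun i _ => (hvec i).mul_left _
  rcases hk.dvd_or_dvd hdvd2 with h | h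
  · exact absurd h hr
  · exact h

open Finset in
lemma not_dvd_of_ne (n m : ℕ) (hn : 2 ≤ n)
    (f : Fin m → Rp n) (d : Fin m → ℕ)
    (hfh : ∀ i, (f i).IsHomogeneous (d i)) (hd : ∀ i, 1 ≤ d i)
    (hsnc : SNC n m f) {k l : Fin m} (hkl : k ≠ l) : ¬ f k ∣ f l := by
  classical
  intro hdvd
  obtain ⟨u, hu⟩ := hdvd
  obtain ⟨p, hp0, hpz⟩ := exists_common_zero (fun _ : Unit => f k) (fun _ => d k)
    (fun _ => hd k) (fun _ => hfh k) (by rw [Fintype.card_unit]; omega)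
  have hk0 : eval p (f k) = 0 := hpz ()
  have hl0 : eval p (f l) = 0 := by rw [hu, map_mul, hk0, zero_mul]
  set I2 : Finset (Fin m) := {k, l} with hI2
  have hcard2 : I2.card = 2 := Finset.card_pair hkl
  have hrank := hsnc.2 I2 (by omega) (by omega) p hp0 (by
    intro i hi
    rcases Finset.mem_insert.mp hi with rfl | hi'
    · exact hk0
    · rw [Finset.mem_singleton.mp hi']; exact hl0)
  have hli := rows_linearIndependent
    (Matrix.of fun (i : ↥I2) (j : Fin n) => eval p (pderiv j (f i.1)))
    (by rw [Fintype.card_coe, hcard2]; rw [hcard2] at hrank; exact_mod_cast hrank)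
  set ρ : Fin 2 → ↥I2 := fun t => if t = 0 then ⟨k, Finset.mem_insert_self _ _⟩
    else ⟨l, Finset.mem_insert_of_mem (Finset.mem_singleton_self _)⟩ with hρ
  have hρinj : Function.Injective ρ := by
    intro a b hab
    fin_cases a <;> fin_cases b <;> simp_all [hρ]
  have hli2 := hli.comp ρ hρinj
  have hrow : ∀ j, eval p (pderiv j (f l)) = eval p u * eval p (pderiv j (f k)) := by
    intro j
    rw [hu, pderiv_mul, map_add, map_mul, map_mul, hk0, zero_mul, add_zero]
    ring
  have hcomb : ∑ t : Fin 2, (if t = 0 then - eval p u else 1) •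
      (fun j => eval p (pderiv j (f ((ρ t : ↥I2) : Fin m)))) = 0 := by
    funext j
    have happ : (∑ t : Fin 2, (if t = 0 then - eval p u else 1) •
        (fun j => eval p (pderiv j (f ((ρ t : ↥I2) : Fin m))))) j
        = ∑ t : Fin 2, (if t = 0 then - eval p u else 1) *
            eval p (pderiv j (f ((ρ t : ↥I2) : Fin m))) := by
      rw [Finset.sum_apply]
      rfl
    rw [happ, Fin.sum_univ_two]
    have h0 : ((ρ 0 : ↥I2) : Fin m) = k := rfl
    have h1 : ((ρ 1 : ↥I2) : Fin m) = l := rfl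
    rw [h0, h1]
    show - eval p u * eval p (pderiv j (f k)) + 1 * eval p (pderiv j (f l)) = 0
    rw [hrow j]
    ring
  have hall := Fintype.linearIndependent_iff.mp hli2 _ hcomb
  have h1 := hall 1
  norm_num at h1

lemma prod_dvd_of_forall_dvd {n m : ℕ} (f : Fin m → Rp n)
    (hprime : ∀ k, Prime (f k)) (hnd : ∀ k l, k ≠ l → ¬ f k ∣ f l)
    (g : Rp n) (h : ∀ k, f k ∣ g) : (∏ k, f k) ∣ g := by
  classical
  suffices H : ∀ s : Finset (Fin m), (∏ k ∈ s, f k) ∣ g from H Finset.univ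
  intro s
  induction s using Finset.cons_induction with
  | empty => simpa using one_dvd g
  | cons a s ha ih =>
      obtain ⟨h', hh'⟩ := ih
      have hfa : f a ∣ (∏ k ∈ s, f k) * h' := hh' ▸ h a
      rcases (hprime a).dvd_or_dvd hfa with hca | hca
      · exfalso
        obtain ⟨l, hl, hdl⟩ := (Prime.dvd_finset_prod_iff (hprime a) _).mp hca
        exact hnd a l (by rintro rfl; exact ha hl) hdl
      · obtain ⟨h'', hh''⟩ := hca
        refine ⟨h'', ?_⟩
        rw [Finset.prod_cons, hh', hh'']
        ring

lemma pderiv_inl_P {n m : ℕ} (q : Fin m → Rp n) (i : Fin m) :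
    pderiv (Sum.inl i) (∑ l, X (Sum.inl l) * toS n m (q l)) = toS n m (q i) := by
  rw [map_sum]
  have hterm : ∀ l : Fin m, pderiv (Sum.inl i) (X (Sum.inl l) * toS n m (q l))
      = (if l = i then 1 else 0) * toS n m (q l) := by
    intro l
    rw [pderiv_mul, pderiv_inl_toS, mul_zero, add_zero, pderiv_inl_X_inl]
  rw [Finset.sum_congr rfl fun l _ => hterm l]
  simp only [ite_mul, one_mul, zero_mul]
  rw [Finset.sum_ite_eq' Finset.univ i (fun l => toS n m (q l)),
    if_pos (Finset.mem_univ i)]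

lemma pderiv_inl_hpoly {n m : ℕ} (f : Fin m → Rp n) (j : Fin n) (i : Fin m) :
    pderiv (Sum.inl i) (hpoly n m f j)
      = toS n m ((Finset.univ.erase i).prod f * pderiv j (f i)) :=
  pderiv_inl_P (fun l => (Finset.univ.erase l).prod f * pderiv j (f l)) i

lemma eps_hpoly {n m : ℕ} (f : Fin m → Rp n) (j : Fin n) :
    eps n m (hpoly n m f j) = 0 := by
  rw [hpoly, map_sum]
  refine Finset.sum_eq_zero fun l _ => ?_
  rw [map_mul, eps_X_inl, zero_mul]

lemma extract_coeff {n m : ℕ} (f : Fin m → Rp n) (q : Fin m → Rp n) (g : Fin n → Sp n m)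
    (M : ℕ)
    (heq : (∑ l, X (Sum.inl l) * toS n m (q l)) * (toS n m (∏ i', f i')) ^ M
      = ∑ j, g j * hpoly n m f j) (i : Fin m) :
    q i * (∏ i', f i') ^ M
      = ∑ j, eps n m (g j) * ((Finset.univ.erase i).prod f * pderiv j (f i)) := by
  have hL : eps n m (pderiv (Sum.inl i)
      ((∑ l, X (Sum.inl l) * toS n m (q l)) * (toS n m (∏ i', f i')) ^ M))
      = q i * (∏ i', f i') ^ M := by
    rw [pderiv_mul, pderiv_inl_P]
    have hpow : pderiv (Sum.inl i) ((toS n m (∏ i', f i')) ^ M) = 0 := by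
      rw [← map_pow, pderiv_inl_toS]
    rw [hpow, mul_zero, add_zero, map_mul, eps_toS, map_pow, eps_toS]
  have hR : eps n m (pderiv (Sum.inl i) (∑ j, g j * hpoly n m f j))
      = ∑ j, eps n m (g j) * ((Finset.univ.erase i).prod f * pderiv j (f i)) := by
    rw [map_sum, map_sum]
    refine Finset.sum_congr rfl fun j _ => ?_
    rw [pderiv_mul, map_add, map_mul, eps_hpoly, mul_zero, zero_add, map_mul,
      pderiv_inl_hpoly, eps_toS]
  rw [← hL, heq, hR]

lemma key_induction (n m : ℕ) (hn : 2 ≤ n) (hm : n + 1 ≤ m)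
    (f : Fin m → Rp n) (d : Fin m → ℕ)
    (hf0 : ∀ i, f i ≠ 0) (hfh : ∀ i, (f i).IsHomogeneous (d i)) (hd : ∀ i, 1 ≤ d i)
    (hsnc : SNC n m f) (q : Fin m → Rp n) :
    ∀ (M : ℕ) (G : Fin n → Rp n),
      (∀ i, ∑ j, G j * pderiv j (f i) = (∏ i', f i') ^ M * (f i * q i)) →
      ∃ θ : Fin n → Rp n, ∀ i, f i * q i = ∑ j, θ j * pderiv j (f i) := by
  intro M
  induction M with
  | zero =>
      intro G hG
      exact ⟨G, fun i => by rw [hG i, pow_zero, one_mul]⟩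
  | succ M IH =>
      intro G hG
      have hprime : ∀ k, Prime (f k) := fun k =>
        (UniqueFactorizationMonoid.irreducible_iff_prime).mp (hsnc.1 k)
      have hdvd : ∀ k j, f k ∣ G j := by
        intro k
        apply dvd_components n m hn hm f d hfh hd hsnc k (hprime k) G
        intro i
        rw [hG i]
        exact ((Finset.dvd_prod_of_mem f (Finset.mem_univ k)).trans
          (dvd_pow_self _ (Nat.succ_ne_zero M))).mul_right _
      have hdvdF : ∀ j, (∏ i', f i') ∣ G j := fun j =>
        prod_dvd_of_forall_dvd f hprime
          (fun k l hkl => not_dvd_of_ne n m hn f d hfh hd hsnc hkl) (G j)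
          (fun k => hdvd k j)
      choose G' hG' using hdvdF
      refine IH G' (fun i => ?_)
      have hF0 : (∏ i', f i') ≠ 0 := Finset.prod_ne_zero_iff.mpr (fun i _ => hf0 i)
      apply mul_left_cancel₀ hF0
      calc (∏ i', f i') * (∑ j, G' j * pderiv j (f i))
          = ∑ j, G j * pderiv j (f i) := by
            rw [Finset.mul_sum]
            refine Finset.sum_congr rfl fun j _ => ?_
            rw [hG' j]; ring
        _ = (∏ i', f i') ^ (M + 1) * (f i * q i) := hG i
        _ = (∏ i', f i') * ((∏ i', f i') ^ M * (f i * q i)) := by rw [pow_succ]; ring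

/-- Every element of `I_A` of the form `Σ_i s_i·q_i` with `q_i ∈ R` comes
from a tangent derivation: there is `θ ∈ R^n` with `f_i·q_i = Σ_j θ_j·∂f_i/∂x_j` for all `i`. -/
theorem s_linear_part_comes_from_derivation (n m : ℕ) (hn : 2 ≤ n) (hm : n + 1 ≤ m)
    (f : Fin m → Rp n) (d : Fin m → ℕ)
    (hf0 : ∀ i, f i ≠ 0) (hfh : ∀ i, (f i).IsHomogeneous (d i)) (hd : ∀ i, 1 ≤ d i)
    (hsnc : SNC n m f)
    (q : Fin m → Rp n)
    (hP : (∑ i, X (Sum.inl i) * toS n m (q i)) ∈ IA n m f) :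
    ∃ θ : Fin n → Rp n, ∀ i, f i * q i = ∑ j, θ j * pderiv j (f i) := by
  classical
  have htoSinj : Function.Injective (toS n m) := rename_injective _ Sum.inr_injective
  have hF0 : (∏ i, f i) ≠ 0 := Finset.prod_ne_zero_iff.mpr (fun i _ => hf0 i)
  have hFS0 : toS n m (∏ i, f i) ≠ 0 := fun h => hF0 (htoSinj (by rw [h, map_zero]))
  rw [IA, Ideal.mem_comap] at hP
  have hspanmap : Ideal.span (Set.range fun j =>
      algebraMap (Sp n m) (Localization.Away (toS n m (∏ i, f i))) (hpoly n m f j))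
      = Ideal.map (algebraMap (Sp n m) (Localization.Away (toS n m (∏ i, f i))))
          (Ideal.span (Set.range (hpoly n m f))) := by
    rw [Ideal.map_span, ← Set.range_comp]
    rfl
  rw [hspanmap] at hP
  obtain ⟨⟨a, s⟩, hs⟩ := (IsLocalization.mem_map_algebraMap_iff
    (Submonoid.powers (toS n m (∏ i, f i)))
    (Localization.Away (toS n m (∏ i, f i)))).mp hP
  obtain ⟨N, hN⟩ := s.2
  have hinj : Function.Injective (algebraMap (Sp n m)
      (Localization.Away (toS n m (∏ i, f i)))) :=
    IsLocalization.injective _ (powers_le_nonZeroDivisors_of_noZeroDivisors hFS0)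
  have heq : (∑ i, X (Sum.inl i) * toS n m (q i)) * (toS n m (∏ i, f i)) ^ N = ↑a := by
    apply hinj
    rw [map_mul, show (toS n m (∏ i, f i)) ^ N = ((s : Sp n m)) from hN]
    exact hs
  obtain ⟨g, hg⟩ := (Submodule.mem_span_range_iff_exists_fun (Sp n m)).mp a.2
  simp only [smul_eq_mul] at hg
  have heqN : (∑ i, X (Sum.inl i) * toS n m (q i)) * (toS n m (∏ i, f i)) ^ N
      = ∑ j, g j * hpoly n m f j := heq.trans hg.symm
  have heq2 : (∑ i, X (Sum.inl i) * toS n m (q i)) * (toS n m (∏ i, f i)) ^ (N + 1)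
      = ∑ j, (toS n m (∏ i, f i) * g j) * hpoly n m f j := by
    calc (∑ i, X (Sum.inl i) * toS n m (q i)) * (toS n m (∏ i, f i)) ^ (N + 1)
        = ((∑ i, X (Sum.inl i) * toS n m (q i)) * (toS n m (∏ i, f i)) ^ N)
            * toS n m (∏ i, f i) := by rw [pow_succ]; ring
      _ = (∑ j, g j * hpoly n m f j) * toS n m (∏ i, f i) := by rw [heqN]
      _ = ∑ j, (toS n m (∏ i, f i) * g j) * hpoly n m f j := by
          rw [Finset.sum_mul]
          exact Finset.sum_congr rfl fun j _ => by ring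
  set G : Fin n → Rp n := fun j => eps n m (toS n m (∏ i, f i) * g j) with hGdef
  have hstep : ∀ i, ∑ j, G j * pderiv j (f i) = (∏ i', f i') ^ N * (f i * q i) := by
    intro i
    have hext := extract_coeff f q (fun j => toS n m (∏ i', f i') * g j) (N + 1) heq2 i
    apply mul_left_cancel₀ hF0
    calc (∏ i', f i') * (∑ j, G j * pderiv j (f i))
        = f i * (∑ j, G j * ((Finset.univ.erase i).prod f * pderiv j (f i))) := by
          rw [Finset.mul_sum, Finset.mul_sum]
          refine Finset.sum_congr rfl fun j _ => ?_
          rw [← Finset.mul_prod_erase _ f (Finset.mem_univ i)]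
          ring
      _ = f i * (q i * (∏ i', f i') ^ (N + 1)) := by rw [← hext]
      _ = (∏ i', f i') * ((∏ i', f i') ^ N * (f i * q i)) := by rw [pow_succ]; ring
  exact key_induction n m hn hm f d hf0 hfh hd hsnc q N G hstep
end
end

section
/- Equip S with the ℤ²-grading in which deg s_i = (1,0) for all i and deg x_j = (0,1) for all j. Assume m ≥ n+1. Then every (m+1)×(m+1) minor of Q^s_{∖1} is bihomogeneous (or zero); moreover, a column selection of size m+1 necessarily uses at least 2 of the last n (Jacobian) columns, and any minor using exactly i of the last n columns (2 ≤ i ≤ n) is bihomogeneous of bidegree (1, d_1 + d_2 + ⋯ + d_m − i) or zero. -/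
open MvPolynomial

noncomputable section

/-- Weight function for the bigrading. -/
abbrev bw (n m : ℕ) : Fin m ⊕ Fin n → ℕ × ℕ :=
  Sum.elim (fun _ : Fin m => ((1, 0) : ℕ × ℕ)) (fun _ : Fin n => ((0, 1) : ℕ × ℕ))

lemma weight_single_aux {σ M : Type*} [AddCommMonoid M] (w : σ → M) (j : σ) (b : ℕ) :
    Finsupp.weight w (Finsupp.single j b) = b • w j := by
  simp [Finsupp.weight_apply, Finsupp.sum_single_index]

lemma isWH_toS {n m k : ℕ} {p : Rp n} (hp : p.IsHomogeneous k) :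
    IsWeightedHomogeneous (bw n m) (toS n m p) (0, k) := by
  intro dd hdd
  have hdd' : MvPolynomial.coeff dd (rename (Sum.inr : Fin n → Fin m ⊕ Fin n) p) ≠ 0 := hdd
  obtain ⟨u, rfl, hu⟩ := coeff_rename_ne_zero _ _ _ hdd'
  have hk : Finsupp.weight (1 : Fin n → ℕ) u = k := hp hu
  rw [Finsupp.mapDomain]
  rw [map_finsuppSum]
  have : ∀ a ∈ u.support, Finsupp.weight (bw n m) (Finsupp.single (Sum.inr a : Fin m ⊕ Fin n) (u a))
      = ((0 : ℕ), u a) := by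
    intro a _
    rw [weight_single_aux]
    simp [Prod.smul_mk]
  rw [Finsupp.sum, Finset.sum_congr rfl this, Prod.ext_iff]
  constructor
  · simp [Prod.fst_sum]
  · simp only [Prod.snd_sum]
    rw [← hk, Finsupp.weight_apply, Finsupp.sum]
    simp

lemma isHomogeneous_pderiv {n k : ℕ} {p : Rp n} (hp : p.IsHomogeneous k) (j : Fin n) :
    (pderiv j p).IsHomogeneous (k - 1) := by
  conv_lhs => rw [p.as_sum]
  rw [map_sum]
  apply IsHomogeneous.sum
  intro v hv
  rw [pderiv_monomial]
  by_cases h0 : v j = 0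
  · simp only [h0, Nat.cast_zero, mul_zero, monomial_zero]
    exact isHomogeneous_zero _ _ _
  · apply isHomogeneous_monomial
    have hvd : Finsupp.weight (1 : Fin n → ℕ) v = k := hp (MvPolynomial.mem_support_iff.mp hv)
    have hle : Finsupp.single j 1 ≤ v := by
      rw [Finsupp.single_le_iff]; omega
    have hadd : (v - Finsupp.single j 1) + Finsupp.single j 1 = v := tsub_add_cancel_of_le hle
    have := congrArg (Finsupp.weight (1 : Fin n → ℕ)) hadd
    rw [map_add, weight_single_aux] at this
    rw [Finsupp.degree_eq_weight_one]
    simp only [Pi.one_apply, smul_eq_mul, mul_one] at this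
    simp only [Pi.one_def] at this hvd
    omega

/-- Each `(m+1) × (m+1)` minor of `Q^s_{∖1}` uses at least two Jacobian
columns, and a minor using exactly `i` of the last `n` columns is zero or bihomogeneous of
bidegree `(1, d_1 + ⋯ + d_m − i)` for the grading `deg s_i = (1,0)`, `deg x_j = (0,1)`. -/
theorem minors_bihomogeneous (n m : ℕ) (hn : 2 ≤ n) (hm : n + 1 ≤ m)
    (f : Fin m → Rp n) (d : Fin m → ℕ)
    (hf0 : ∀ i, f i ≠ 0) (hfh : ∀ i, (f i).IsHomogeneous (d i)) (hd : ∀ i, 1 ≤ d i) :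
    ∀ (r : Fin (m + 1) → Option (Fin m)) (c : Fin (m + 1) → Col n m),
      Function.Injective r → Function.Injective c →
      2 ≤ (Finset.univ.filter fun l : Fin (m + 1) => (c l).isRight).card ∧
      (((Qs1 n m f).submatrix r c).det = 0 ∨
        IsWeightedHomogeneous
          (Sum.elim (fun _ : Fin m => ((1, 0) : ℕ × ℕ)) (fun _ : Fin n => ((0, 1) : ℕ × ℕ)))
          ((Qs1 n m f).submatrix r c).det
          (1, (∑ i, d i) -
            (Finset.univ.filter fun l : Fin (m + 1) => (c l).isRight).card)) := by
  intro r c hr hc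
  classical
  have hm3 : 3 ≤ m := by omega
  have hleft : ∀ l, ¬(c l).isRight = true → ∃ k, c l = Sum.inl k := by
    intro l h
    cases hcl : c l with
    | inl k => exact ⟨k, rfl⟩
    | inr j => rw [hcl] at h; simp at h
  -- Part 1: at least two Jacobian columns
  have hcard1 : (Finset.univ.filter fun l : Fin (m + 1) => ¬(c l).isRight = true).card ≤ m - 1 := by
    have hmaps : ∀ l ∈ Finset.univ.filter fun l : Fin (m + 1) => ¬(c l).isRight = true,
        Sum.elim (fun k : {k : Fin m // (k : ℕ) ≠ 0} => (k : Fin m)) (fun _ => (⟨0, by omega⟩ : Fin m)) (c l)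
          ∈ (Finset.univ : Finset (Fin m)).erase ⟨0, by omega⟩ := by
      intro l hl
      rw [Finset.mem_filter] at hl
      obtain ⟨k, hk⟩ := hleft l hl.2
      rw [hk]
      simp only [Sum.elim_inl, Finset.mem_erase, Finset.mem_univ, and_true]
      intro h
      exact k.2 (by rw [show (k : Fin m) = ⟨0, by omega⟩ from h])
    have hinj : Set.InjOn
        (fun l => Sum.elim (fun k : {k : Fin m // (k : ℕ) ≠ 0} => (k : Fin m))
          (fun _ => (⟨0, by omega⟩ : Fin m)) (c l))
        (Finset.univ.filter fun l : Fin (m + 1) => ¬(c l).isRight = true) := by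
      intro l hl l' hl' h
      rw [Finset.coe_filter, Set.mem_setOf_eq] at hl hl'
      obtain ⟨k, hk⟩ := hleft l hl.2
      obtain ⟨k', hk'⟩ := hleft l' hl'.2
      simp only [hk, hk', Sum.elim_inl] at h
      exact hc (by rw [hk, hk', Subtype.ext h])
    have := Finset.card_le_card_of_injOn _ hmaps hinj
    simpa [Finset.card_erase_of_mem, Finset.card_univ] using this
  have hsplit := Finset.card_filter_add_card_filter_not
    (s := (Finset.univ : Finset (Fin (m + 1)))) (p := fun l => (c l).isRight = true)
  simp only [Finset.card_univ, Fintype.card_fin] at hsplit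
  refine ⟨by omega, Or.inr ?_⟩
  -- Part 2: bihomogeneity
  rw [← mem_weightedHomogeneousSubmodule ℂ, Matrix.det_apply]
  refine Submodule.sum_mem _ fun σ _ => ?_
  rw [Units.smul_def]
  refine zsmul_mem ?_ _
  rw [mem_weightedHomogeneousSubmodule]
  by_cases hz : ∀ l, ((Qs1 n m f).submatrix r c) (σ l) l ≠ 0
  swap
  · push_neg at hz
    obtain ⟨l, hl⟩ := hz
    rw [Finset.prod_eq_zero (f := fun l => ((Qs1 n m f).submatrix r c) (σ l) l) (Finset.mem_univ l) hl]
    exact isWeightedHomogeneous_zero ℂ _ _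
  have hinj2 : Function.Injective (fun l : Fin (m + 1) => r (σ l)) := by
    intro a b hab
    exact σ.injective (hr hab)
  have hbij : Function.Bijective (fun l : Fin (m + 1) => r (σ l)) := by
    rw [Fintype.bijective_iff_injective_and_card]
    exact ⟨hinj2, by simp⟩
  let e : Fin (m + 1) ≃ Option (Fin m) := Equiv.ofBijective _ hbij
  have he : ∀ l, r (σ l) = e l := fun l => rfl
  set g : Fin (m + 1) → ℕ × ℕ := fun l =>
    Option.elim (e l) ((1 : ℕ), (0 : ℕ))
      (fun i => ((0 : ℕ), d i - (if (c l).isRight then 1 else 0))) with hg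
  have hhom : IsWeightedHomogeneous (bw n m)
      (∏ l, ((Qs1 n m f).submatrix r c) (σ l) l) (∑ l, g l) := by
    apply IsWeightedHomogeneous.prod
    intro l _
    have hentry : ((Qs1 n m f).submatrix r c) (σ l) l = Qs1 n m f (r (σ l)) (c l) := rfl
    rw [hentry, he l]
    rcases ho : e l with _ | i <;> rcases hcl : c l with k | j
    · simp only [hg, ho, hcl, Option.elim, Qs1, Matrix.of_apply, Sum.elim_inl]
      exact isWeightedHomogeneous_X ℂ _ _
    · simp only [Qs1, Matrix.of_apply, Option.elim, Sum.elim_inr]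
      exact isWeightedHomogeneous_zero ℂ _ _
    · simp only [hg, ho, hcl, Option.elim, Sum.isRight_inl, if_false, Nat.sub_zero,
        Qs1, Q1, Matrix.of_apply, Sum.elim_inl]
      by_cases hik : i = (k : Fin m)
      · rw [if_pos hik]
        exact isWH_toS (hfh i)
      · rw [if_neg hik, map_zero]
        exact isWeightedHomogeneous_zero ℂ _ _
    · simp only [hg, ho, hcl, Option.elim, Sum.isRight_inr, if_true,
        Qs1, Q1, Matrix.of_apply, Sum.elim_inr]
      exact isWH_toS (isHomogeneous_pderiv (hfh i) j)
  have hcnone : ¬(c (e.symm none)).isRight = true := by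
    intro h
    cases hcn : c (e.symm none) with
    | inl k => rw [hcn] at h; simp at h
    | inr j =>
      apply hz (e.symm none)
      have hentry : ((Qs1 n m f).submatrix r c) (σ (e.symm none)) (e.symm none)
          = Qs1 n m f (r (σ (e.symm none))) (c (e.symm none)) := rfl
      rw [hentry, he, Equiv.apply_symm_apply, hcn]
      simp [Qs1]
  have hsum : ∑ l, g l = (1, (∑ i, d i) -
      (Finset.univ.filter fun l : Fin (m + 1) => (c l).isRight).card) := by
    have h1 : ∑ l, g l = ∑ o : Option (Fin m), g (e.symm o) := by
      rw [Equiv.sum_comp e.symm g]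
    rw [h1, Fintype.sum_option]
    have h2 : g (e.symm none) = (1, 0) := by
      simp [hg, Equiv.apply_symm_apply]
    have h3 : ∀ i : Fin m, g (e.symm (some i))
        = ((0 : ℕ), d i - (if (c (e.symm (some i))).isRight then 1 else 0)) := by
      intro i
      simp [hg, Equiv.apply_symm_apply]
    rw [h2, Finset.sum_congr rfl fun i _ => h3 i]
    rw [← prod_mk_sum]
    have h4 : (Finset.univ.filter fun l : Fin (m + 1) => (c l).isRight).card
        = ∑ i : Fin m, (if (c (e.symm (some i))).isRight then 1 else 0) := by
      rw [Finset.card_filter]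
      have h5 : ∑ l : Fin (m + 1), (if (c l).isRight then 1 else 0)
          = ∑ o : Option (Fin m), (if (c (e.symm o)).isRight then 1 else 0) := by
        rw [Equiv.sum_comp e.symm (fun l => if (c l).isRight then 1 else 0)]
      rw [h5, Fintype.sum_option, if_neg hcnone, zero_add]
    rw [h4, ← Finset.sum_tsub_distrib]
    · simp [Prod.ext_iff]
    · intro i _
      have := hd i
      split <;> omega
  rw [hsum] at hhom
  exact hhom
end
end
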